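/- Let m be any product making the tensor coalgebra (T(V), Δ) (deconcatenation coproduct) into a bialgebra with unit 1 ∈ V^{⊗0}. Then T(V) is a Hopf algebra: the map S defined by S(1) = 1 and S(v_1⊤…⊤v_n) = −Σ_{c ⊆ {1,…,n−1}} (−1)^{|c|} (v_1⊤…⊤v_n)_c is an antipode, where (v_1⊤…⊤v_n)_c replaces the i-th concatenation ⊤ by the product m for every i ∈ c. -/

import Mathlib

open TensorProduct

section TensorPowers

variable (K : Type) [Field K] (M : Type) [AddCommGroup M] [Module K M]

/-- Tensor powers modelling `V^{⊗n}`: `W 0 = K`, `W (n+1) = W n ⊗ V`. -/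
noncomputable def WM : ℕ → ModuleCat K
  | 0 => ModuleCat.of K K
  | n + 1 => ModuleCat.of K (WM n ⊗[K] M)

/-- The underlying type of `WM`. -/
noncomputable abbrev Wt (n : ℕ) : Type := WM K M n

/-- The pure tensor `v 0 ⊗ ⋯ ⊗ v (n-1)` in `Wt n = V^{⊗n}`. -/
noncomputable def wpure : (n : ℕ) → (Fin n → M) → Wt K M n
  | 0, _ => (1 : K)
  | n + 1, v => (wpure n (fun i => v i.castSucc)) ⊗ₜ[K] v (Fin.last n)

end TensorPowers

/-- Cut a word `v₁⊤…⊤vₙ` into blocks according to a set of cut positions: each separator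
carries a Boolean which is `true` exactly when the corresponding `⊤` is replaced by the
product (so it starts a new block). -/
def pieces {V : Type} : V → List (Bool × V) → List (List V)
  | v, [] => [[v]]
  | v, (b, w) :: r =>
    match pieces w r with
    | [] => [[v]]
    | B :: Bs => if b then [v] :: B :: Bs else (v :: B) :: Bs

section Words

variable (K : Type) [Field K] (V : Type) [AddCommGroup V] [Module K V]
variable (C : Type) [AddCommGroup C] [Module K C]

/-- The word `v₁ ⊤ … ⊤ vₙ` of `T(V)`, realized in `C` via the embeddings `emb`. -/
noncomputable def word (emb : (n : ℕ) → Wt K V n →ₗ[K] C) (n : ℕ) (v : Fin n → V) : C :=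
  emb n (wpure K V n v)

/-- The word associated with a list of letters. -/
noncomputable def wordL (emb : (n : ℕ) → Wt K V n →ₗ[K] C) (l : List V) : C :=
  word K V C emb l.length (fun i => l.get i)

/-- The empty word `1 ∈ V^{⊗0} = K`, realized in `C`. -/
noncomputable def onec (emb : (n : ℕ) → Wt K V n →ₗ[K] C) : C :=
  word K V C emb 0 (fun i => i.elim0)

/-- The induced multiplication on `C ⊗ C`: `(a ⊗ b)(c ⊗ d) = (a c) ⊗ (b d)`. -/
noncomputable def mul2 (m : C →ₗ[K] C →ₗ[K] C) :
    (C ⊗[K] C) ⊗[K] (C ⊗[K] C) →ₗ[K] C ⊗[K] C :=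
  (TensorProduct.map (TensorProduct.lift m) (TensorProduct.lift m)) ∘ₗ
    (TensorProduct.tensorTensorTensorComm K C C C C).toLinearMap

/-- `(v₁⊤…⊤vₙ)_c`: the element of `C` obtained by replacing the `i`-th `⊤` of the word by
the product `m` for every cut position `i ∈ c` (the cuts being encoded by the Booleans):
the ordered product of the blocks of the word. -/
noncomputable def cutElem (emb : (n : ℕ) → Wt K V n →ₗ[K] C) (m : C →ₗ[K] C →ₗ[K] C)
    (v : V) (rest : List (Bool × V)) : C :=
  ((pieces v rest).map (wordL K V C emb)).foldr (fun a acc => m a acc) (onec K V C emb)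

end Words

/-! Extend `m` to a ring structure on `C`; an antipode is then exactly a two-sided inverse of
the identity in the convolution ring `Hom(C, C)`. Because `Δ` deconcatenates words,
`g = 1 - id` vanishes on the empty word, so `g ^ k` vanishes on words of length `< k`. Hence
on words of length `n` the identity is inverted by the truncated geometric series
`∑_{k ≤ n} g ^ k` (Takeuchi's argument), and gluing these along the grading gives `S`.
The explicit formula holds because both `S` and the signed sum over cuts solve
`∑_k (w_{≤k}) · S(w_{>k}) = ε(w) 1`, a recursion with a unique solution on words; for the cut
sum this is seen by sorting the cuts according to the first one. -/

open WithConv Finset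

section BilinearRing

variable {K C : Type*} [CommRing K] [AddCommGroup C] [Module K C]
  (m : C →ₗ[K] C →ₗ[K] C) (e : C) (hassoc : ∀ a b c : C, m (m a b) c = m a (m b c))
  (hone : ∀ a : C, m e a = a ∧ m a e = a)

abbrev ringOfBilin : Ring C where
  __ := ‹AddCommGroup C›
  mul a b := m a b
  one := e
  mul_assoc := hassoc
  one_mul a := (hone a).1
  mul_one a := (hone a).2
  left_distrib a := (m a).map_add
  right_distrib := m.map_add₂
  zero_mul := m.map_zero₂
  mul_zero a := (m a).map_zero

abbrev algebraOfBilin : letI := ringOfBilin m e hassoc hone; Algebra K C :=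
  letI := ringOfBilin m e hassoc hone
  Algebra.ofModule m.map_smul₂ fun r a => (m a).map_smul r

end BilinearRing

namespace DirectSum.IsInternal

variable {R ι M N : Type*} [Semiring R] [DecidableEq ι] [AddCommMonoid M] [Module R M]
  [AddCommMonoid N] [Module R N] {D : ι → Submodule R M}

noncomputable def piecewise (h : IsInternal D) (T : ι → M →ₗ[R] N) : M →ₗ[R] N :=
  toModule R ι N (fun i => T i ∘ₗ (D i).subtype) ∘ₗ
    (LinearEquiv.ofBijective (coeLinearMap D) h).symm.toLinearMap

lemma piecewise_apply_of_mem (h : IsInternal D) (T : ι → M →ₗ[R] N) {i : ι} {x : M}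
    (hx : x ∈ D i) : h.piecewise T x = T i x := by
  have hdec : (LinearEquiv.ofBijective (coeLinearMap D) h).symm x = lof R ι (D ·) i ⟨x, hx⟩ :=
    (LinearEquiv.symm_apply_eq _).2 (coeLinearMap_of D i ⟨x, hx⟩).symm
  simp [piecewise, hdec]

end DirectSum.IsInternal

section TensorCoalgebra

variable {K : Type} [Field K] {V : Type} [AddCommGroup V] [Module K V]

lemma span_range_wpure (n : ℕ) : Submodule.span K (Set.range (wpure K V n)) = ⊤ := by
  induction n with
  | zero =>
    -- `Wt K V 0` is `K` itself and `wpure K V 0 _ = 1`, so `x = x • wpure K V 0 _`.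
    refine eq_top_iff.2 fun x _ => ?_
    have h := Submodule.smul_mem (Submodule.span K (Set.range (wpure K V 0))) (show K from x)
      (Submodule.subset_span ⟨Fin.elim0, rfl⟩)
    convert h using 1
    exact (mul_one (show K from x)).symm
  | succ n ih =>
    have hspan : Submodule.span K
        (Set.image2 (fun a b => TensorProduct.mk K _ V a b) (Set.range (wpure K V n)) Set.univ)
        = ⊤ := by
      rw [← Submodule.map₂_span_span, ih, Submodule.span_univ,
        TensorProduct.map₂_mk_top_top_eq_top]
    refine eq_top_iff.2 fun x _ => ?_
    have hx : (x : Wt K V n ⊗[K] V) ∈ Submodule.span K (Set.image2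
        (fun a b => TensorProduct.mk K _ V a b) (Set.range (wpure K V n)) Set.univ) :=
      hspan ▸ trivial
    refine Submodule.span_le.2 ?_ hx
    rintro _ ⟨_, ⟨w, rfl⟩, b, -, rfl⟩
    exact Submodule.subset_span
      ⟨Fin.snoc w b, by simp only [wpure, Fin.snoc_castSucc, Fin.snoc_last]; rfl⟩

variable {C : Type} [AddCommGroup C] [Module K C] (emb : (n : ℕ) → Wt K V n →ₗ[K] C)

lemma word_eq_wordL {n : ℕ} (v : Fin n → V) (l : List V) (hl : l.length = n)
    (hv : ∀ i : Fin n, v i = l[i.1]) : word K V C emb n v = wordL K V C emb l := by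
  subst hl
  exact congrArg (word K V C emb _) (funext hv)

lemma wordL_nil : wordL K V C emb [] = onec K V C emb := rfl

lemma span_range_wordL (hint : DirectSum.IsInternal fun n => LinearMap.range (emb n)) :
    Submodule.span K (Set.range (wordL K V C emb)) = ⊤ := by
  rw [eq_top_iff, ← hint.submodule_iSup_eq_top, iSup_le_iff]
  intro n
  rw [LinearMap.range_eq_map, ← span_range_wpure n, Submodule.map_span, Submodule.span_le]
  rintro _ ⟨_, ⟨w, rfl⟩, rfl⟩
  exact Submodule.subset_span ⟨List.ofFn w, (word_eq_wordL emb w _ (by simp) (by simp)).symm⟩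

variable [Coalgebra K C]
  (hcomul : ∀ (n : ℕ) (v : Fin n → V),
    CoalgebraStruct.comul (R := K) (word K V C emb n v)
      = ∑ k : Fin (n + 1),
          word K V C emb k.1 (fun i => v ⟨i.1, i.2.trans_le k.is_le⟩)
            ⊗ₜ[K] word K V C emb (n - k.1)
              (fun i => v ⟨k.1 + i.1, Nat.add_lt_of_lt_sub' i.2⟩))

include hcomul in
lemma comul_wordL (l : List V) :
    CoalgebraStruct.comul (R := K) (wordL K V C emb l)
      = ∑ k ∈ range (l.length + 1),
          wordL K V C emb (l.take k) ⊗ₜ[K] wordL K V C emb (l.drop k) := by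
  rw [wordL, hcomul, ← Fin.sum_univ_eq_sum_range]
  refine Finset.sum_congr rfl fun k _ => ?_
  rw [word_eq_wordL emb _ (l.take k) (by simp; omega) (by simp),
    word_eq_wordL emb _ (l.drop k) (by simp) (by simp)]

variable {A : Type*} [Ring A] [Algebra K A]

include hcomul in
lemma convMul_apply_wordL (f g : WithConv (C →ₗ[K] A)) (l : List V) :
    (f * g) (wordL K V C emb l)
      = ∑ k ∈ range (l.length + 1),
          f (wordL K V C emb (l.take k)) * g (wordL K V C emb (l.drop k)) := by
  simp [LinearMap.convMul_apply, comul_wordL emb hcomul]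

include hcomul in
lemma convMul_apply_wordL_congr {f f' g g' : WithConv (C →ₗ[K] A)} {l : List V}
    (hf : ∀ l' : List V, l'.length ≤ l.length →
      f (wordL K V C emb l') = f' (wordL K V C emb l'))
    (hg : ∀ l' : List V, l'.length ≤ l.length →
      g (wordL K V C emb l') = g' (wordL K V C emb l')) :
    (f * g) (wordL K V C emb l) = (f' * g') (wordL K V C emb l) := by
  simp only [convMul_apply_wordL emb hcomul]
  refine Finset.sum_congr rfl fun k _ => ?_
  rw [hf _ (by simp), hg _ (by simp)]

include hcomul in
lemma pow_apply_wordL_eq_zero {g : WithConv (C →ₗ[K] A)} (hg : g (onec K V C emb) = 0)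
    {k : ℕ} {l : List V} (hl : l.length < k) : (g ^ k) (wordL K V C emb l) = 0 := by
  induction k generalizing l with
  | zero => omega
  | succ k ih =>
    rw [pow_succ', convMul_apply_wordL emb hcomul]
    refine Finset.sum_eq_zero fun j hj => ?_
    rcases j with _ | j
    · rw [List.take_zero, wordL_nil, hg, zero_mul]
    · rw [ih (by simp only [mem_range] at hj; simp; omega), mul_zero]

include hcomul in
theorem isUnit_toConv_of_apply_onec
    (hint : DirectSum.IsInternal fun n => LinearMap.range (emb n))
    (hcounit0 : CoalgebraStruct.counit (R := K) (onec K V C emb) = 1)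
    (f : C →ₗ[K] A) (hf : f (onec K V C emb) = 1) : IsUnit (toConv f) := by
  set g : WithConv (C →ₗ[K] A) := 1 - toConv f
  have hg : g (onec K V C emb) = 0 := by simp [g, hcounit0, hf]
  set T : ℕ → WithConv (C →ₗ[K] A) := fun n => ∑ k ∈ range (n + 1), g ^ k
  have hT {n : ℕ} {l : List V} (hl : l.length ≤ n) :
      T n (wordL K V C emb l) = T l.length (wordL K V C emb l) := by
    simp only [T, ofConv_sum, LinearMap.sum_apply]
    refine (Finset.sum_subset (range_subset_range.2 (by omega)) fun k hk hk' => ?_).symm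
    simp only [mem_range] at hk hk'
    exact pow_apply_wordL_eq_zero emb hcomul hg (by omega)
  set σ : WithConv (C →ₗ[K] A) := toConv (hint.piecewise fun n => (T n).ofConv)
  have hσ {n : ℕ} {l : List V} (hl : l.length ≤ n) :
      σ (wordL K V C emb l) = T n (wordL K V C emb l) := by
    rw [hT hl]
    exact hint.piecewise_apply_of_mem _ ⟨_, rfl⟩
  have hfg : toConv f = 1 - g := by simp [g]
  have hext {φ ψ : WithConv (C →ₗ[K] A)}
      (h : ∀ l, φ (wordL K V C emb l) = ψ (wordL K V C emb l)) : φ = ψ :=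
    WithConv.ext (LinearMap.ext_on_range (span_range_wordL emb hint) h)
  refine ⟨⟨toConv f, σ, hext fun l => ?_, hext fun l => ?_⟩, rfl⟩
  · rw [convMul_apply_wordL_congr emb hcomul (f' := 1 - g) (g' := T l.length)
      (fun _ _ => by rw [hfg]) (fun _ => hσ), mul_neg_geom_sum, ofConv_sub,
      LinearMap.sub_apply, pow_apply_wordL_eq_zero emb hcomul hg (by omega), sub_zero]
  · rw [convMul_apply_wordL_congr emb hcomul (f' := T l.length) (g' := 1 - g)
      (fun _ => hσ) (fun _ _ => by rw [hfg]), geom_sum_mul_neg, ofConv_sub,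
      LinearMap.sub_apply, pow_apply_wordL_eq_zero emb hcomul hg (by omega), sub_zero]

end TensorCoalgebra

section Pieces

variable {V : Type}

lemma exists_pieces_eq_cons (w : V) (r : List (Bool × V)) :
    ∃ B Bs, pieces w r = B :: Bs := by
  induction r generalizing w with
  | nil => exact ⟨[w], [], rfl⟩
  | cons p r ih =>
    obtain ⟨b, x⟩ := p
    obtain ⟨B, Bs, h⟩ := ih x
    cases b <;> simp [pieces, h]

lemma pieces_map_false (u : V) (us : List V) :
    pieces u (us.map ((false, ·))) = [u :: us] := by
  induction us generalizing u with
  | nil => rfl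
  | cons w us ih => simp [pieces, ih w]

lemma pieces_map_false_append_true (u w : V) (us : List V) (r : List (Bool × V)) :
    pieces u (us.map ((false, ·)) ++ (true, w) :: r) = (u :: us) :: pieces w r := by
  induction us generalizing u with
  | nil =>
    obtain ⟨B, Bs, h⟩ := exists_pieces_eq_cons w r
    simp [pieces, h]
  | cons x us ih => simp [pieces, ih x]

lemma card_filter_fin_cons {n : ℕ} (b : Bool) (msk : Fin n → Bool) :
    #{i | (Fin.cons b msk : Fin (n + 1) → Bool) i = true}
      = (if b then 1 else 0) + #{i | msk i} := by
  rw [card_filter, card_filter, Fin.sum_univ_succ]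
  simp

end Pieces

section Cuts

variable {K : Type} [Field K] {V : Type} [AddCommGroup V] [Module K V]
  {C : Type} [AddCommGroup C] [Module K C] (emb : (n : ℕ) → Wt K V n →ₗ[K] C)
  (m : C →ₗ[K] C →ₗ[K] C)
  (hone : ∀ a : C, m (onec K V C emb) a = a ∧ m a (onec K V C emb) = a)

include hone in
lemma cutElem_map_false (u : V) (us : List V) :
    cutElem K V C emb m u (us.map ((false, ·))) = wordL K V C emb (u :: us) := by
  simp [cutElem, pieces_map_false, (hone _).2]

lemma cutElem_map_false_append_true (u w : V) (us : List V) (r : List (Bool × V)) :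
    cutElem K V C emb m u (us.map ((false, ·)) ++ (true, w) :: r)
      = m (wordL K V C emb (u :: us)) (cutElem K V C emb m w r) := by
  simp [cutElem, pieces_map_false_append_true]

noncomputable def cutSum : List V → C
  | [] => onec K V C emb
  | v :: vs => -∑ msk : Fin vs.length → Bool,
      ((-1 : K) ^ (Finset.univ.filter fun i => msk i = true).card) •
        cutElem K V C emb m v (List.zip (List.ofFn msk) vs)

include hone in
lemma sum_cutElem_map_false_append (u : V) (us vs : List V) :
    ∑ msk : Fin vs.length → Bool, ((-1 : K) ^ #{i | msk i}) •
        cutElem K V C emb m u (us.map ((false, ·)) ++ List.zip (List.ofFn msk) vs)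
      = ∑ j ∈ range (vs.length + 1),
          m (wordL K V C emb (u :: (us ++ vs.take j))) (cutSum emb m (vs.drop j)) := by
  induction vs generalizing us with
  | nil => simp [cutSum, cutElem_map_false emb m hone, (hone _).2]
  | cons w vs ih =>
    change ∑ msk : Fin (vs.length + 1) → Bool, _ = _
    rw [← (Fin.consEquiv fun _ => Bool).sum_comp, Fintype.sum_prod_type, Fintype.sum_bool,
      sum_range_succ', List.take_zero, List.append_nil, List.drop_zero, cutSum, map_neg,
      map_sum, ← sum_neg_distrib, add_comm]
    congr 1
    · have h := ih (us ++ [w])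
      simp only [List.append_assoc, List.singleton_append] at h
      simp only [List.length_cons, List.take_succ_cons, List.drop_succ_cons, ← h]
      refine Finset.sum_congr rfl fun msk _ => ?_
      simp [card_filter_fin_cons, List.ofFn_succ]
    · refine Finset.sum_congr rfl fun msk _ => ?_
      simp [card_filter_fin_cons, List.ofFn_succ, cutElem_map_false_append_true, pow_add]

include hone in
lemma sum_wordL_mul_cutSum [Coalgebra K C]
    (hcounit0 : CoalgebraStruct.counit (R := K) (onec K V C emb) = 1)
    (hcounit : ∀ (n : ℕ) (v : Fin (n + 1) → V),
      CoalgebraStruct.counit (R := K) (word K V C emb (n + 1) v) = 0) (l : List V) :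
    ∑ k ∈ range (l.length + 1), m (wordL K V C emb (l.take k)) (cutSum emb m (l.drop k))
      = CoalgebraStruct.counit (R := K) (wordL K V C emb l) • onec K V C emb := by
  cases l with
  | nil => simp [cutSum, wordL_nil, hcounit0, (hone _).1]
  | cons v vs =>
    have h := sum_cutElem_map_false_append emb m hone v [] vs
    simp only [List.map_nil, List.nil_append] at h
    rw [List.length_cons, sum_range_succ']
    simp only [List.take_succ_cons, List.drop_succ_cons, List.take_zero, List.drop_zero]
    rw [← h, wordL_nil, (hone _).1, cutSum, add_neg_cancel,
      show CoalgebraStruct.counit (R := K) (wordL K V C emb (v :: vs)) = 0 from hcounit _ _,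
      zero_smul]

include hone in
lemma eq_of_sum_wordL_mul_eq {F G : List V → C}
    (h : ∀ l : List V,
      ∑ k ∈ range (l.length + 1), m (wordL K V C emb (l.take k)) (F (l.drop k))
        = ∑ k ∈ range (l.length + 1), m (wordL K V C emb (l.take k)) (G (l.drop k))) :
    F = G := by
  funext l
  induction hn : l.length using Nat.strong_induction_on generalizing l with
  | _ n ih =>
    have hl := h l
    have htail : ∀ k ∈ range l.length, F (l.drop (k + 1)) = G (l.drop (k + 1)) :=
      fun k hk => ih _ (by simp at hk ⊢; omega) _ rfl
    rw [sum_range_succ', sum_range_succ', sum_congr rfl fun k hk => by rw [htail k hk]]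
      at hl
    simpa [wordL_nil, (hone _).1] using hl

end Cuts

/-- Let `m` be any product making the tensor coalgebra `T(V)` (with the
deconcatenation coproduct, realized as a coalgebra `C` with embeddings `emb` as in the
tensor-coalgebra setup) a bialgebra with unit the empty word `1`. Then `T(V)` is a Hopf
algebra with antipode `S(1) = 1`,
`S(v₁⊤…⊤vₙ) = − Σ_{c ⊆ {1,…,n−1}} (−1)^{|c|} (v₁⊤…⊤vₙ)_c`. -/
theorem stmt_19 (K : Type) [Field K] (V : Type) [AddCommGroup V] [Module K V]
    (C : Type) [AddCommGroup C] [Module K C] [Coalgebra K C]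
    (emb : (n : ℕ) → Wt K V n →ₗ[K] C)
    (hint : DirectSum.IsInternal fun n => LinearMap.range (emb n))
    (hcomul : ∀ (n : ℕ) (v : Fin n → V),
      CoalgebraStruct.comul (R := K) (word K V C emb n v)
        = ∑ k : Fin (n + 1),
            word K V C emb k.1 (fun i => v ⟨i.1, by omega⟩)
              ⊗ₜ[K] word K V C emb (n - k.1) (fun i => v ⟨k.1 + i.1, by omega⟩))
    (hcounit0 : CoalgebraStruct.counit (R := K) (onec K V C emb) = 1)
    (hcounit : ∀ (n : ℕ) (v : Fin (n + 1) → V),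
      CoalgebraStruct.counit (R := K) (word K V C emb (n + 1) v) = 0)
    -- `m` is an associative product with unit the empty word, making `(C, Δ, ε)` a bialgebra
    (m : C →ₗ[K] C →ₗ[K] C)
    (hassoc : ∀ a b c : C, m (m a b) c = m a (m b c))
    (hone : ∀ a : C, m (onec K V C emb) a = a ∧ m a (onec K V C emb) = a) :
    ∃ S : C →ₗ[K] C,
      S (onec K V C emb) = onec K V C emb ∧
      (∀ (v : V) (vs : List V),
        S (wordL K V C emb (v :: vs))
          = - ∑ msk : Fin vs.length → Bool,
              ((-1 : K) ^ (Finset.univ.filter fun i => msk i = true).card) •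
                cutElem K V C emb m v (List.zip (List.ofFn msk) vs)) ∧
      (∀ x : C,
        TensorProduct.lift m
            ((TensorProduct.map S LinearMap.id) (CoalgebraStruct.comul (R := K) x))
          = CoalgebraStruct.counit (R := K) x • onec K V C emb) ∧
      (∀ x : C,
        TensorProduct.lift m
            ((TensorProduct.map LinearMap.id S) (CoalgebraStruct.comul (R := K) x))
          = CoalgebraStruct.counit (R := K) x • onec K V C emb) := by
  let _ := ringOfBilin m (onec K V C emb) hassoc hone
  let _ := algebraOfBilin m (onec K V C emb) hassoc hone
  obtain ⟨u, hu⟩ := isUnit_toConv_of_apply_onec emb hcomul hint hcounit0 LinearMap.id rfl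
  set S : C →ₗ[K] C := (↑u⁻¹ : WithConv (C →ₗ[K] C)).ofConv
  have hconv (f g : C →ₗ[K] C) (x : C) :
      (toConv f * toConv g) x = lift m (map f g (CoalgebraStruct.comul (R := K) x)) := rfl
  have hunit (x : C) : (1 : WithConv (C →ₗ[K] C)) x
      = CoalgebraStruct.counit (R := K) x • onec K V C emb :=
    (LinearMap.convOne_apply x).trans (Algebra.algebraMap_eq_smul_one _)
  have hleft : toConv S * toConv LinearMap.id = 1 := hu ▸ u.inv_mul
  have hright : toConv LinearMap.id * toConv S = 1 := hu ▸ u.mul_inv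
  have hS : (fun l => S (wordL K V C emb l)) = cutSum emb m :=
    eq_of_sum_wordL_mul_eq emb m hone fun l => by
      rw [sum_wordL_mul_cutSum emb m hone hcounit0 hcounit, ← hunit, ← hright,
        convMul_apply_wordL emb hcomul]
      rfl
  refine ⟨S, congrFun hS [], fun v vs => congrFun hS (v :: vs), fun x => ?_, fun x => ?_⟩
  · rw [← hconv, hleft, hunit]
  · rw [← hconv, hright, hunit]
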